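/- The number of inclusion-minimal independent sets S of G with d(S) > 0 is at least the critical difference d_c(G). -/
import Mathlib


open Classical Finset

/-- Neighborhood of a set of vertices: all vertices adjacent to some vertex of `X`. -/
noncomputable def nbhd {V : Type*} (G : SimpleGraph V) [Fintype V] (X : Finset V) : Finset V :=
  Finset.univ.filter (fun v => ∃ x ∈ X, G.Adj x v)

/-- The difference `d(X) = |X| - |N(X)|`. -/
noncomputable def gdiff {V : Type*} (G : SimpleGraph V) [Fintype V] (X : Finset V) : ℤ :=
  (X.card : ℤ) - ((nbhd G X).card : ℤ)

/-- `X` is an independent set of `G`. -/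
def IsIndep {V : Type*} (G : SimpleGraph V) (X : Finset V) : Prop :=
  ∀ x ∈ X, ∀ y ∈ X, ¬ G.Adj x y

/-- The critical difference `d_c(G) = max { d(X) : X ⊆ V(G) }`. -/
noncomputable def critDiff {V : Type*} (G : SimpleGraph V) [Fintype V] : ℤ :=
  Finset.univ.powerset.sup' ⟨∅, Finset.empty_mem_powerset _⟩ (gdiff G)

/-- `X` is a critical set of `G`. -/
noncomputable def IsCritical {V : Type*} (G : SimpleGraph V) [Fintype V] (X : Finset V) : Prop :=
  gdiff G X = critDiff G

/-- `ker G` : the intersection of all critical sets of `G`. -/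
noncomputable def kerG {V : Type*} (G : SimpleGraph V) [Fintype V] : Finset V :=
  Finset.univ.filter (fun v => ∀ X : Finset V, IsCritical G X → v ∈ X)

/-- `diadem G` : the union of all critical independent sets of `G`. -/
noncomputable def diademG {V : Type*} (G : SimpleGraph V) [Fintype V] : Finset V :=
  Finset.univ.filter (fun v => ∃ X : Finset V, IsCritical G X ∧ IsIndep G X ∧ v ∈ X)

/-- The independence number `α(G)`. -/
noncomputable def alphaG {V : Type*} (G : SimpleGraph V) [Fintype V] : ℕ :=
  (Finset.univ.powerset.filter (IsIndep G)).sup Finset.card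

/-- `core G` : the intersection of all maximum independent sets of `G`. -/
noncomputable def coreG {V : Type*} (G : SimpleGraph V) [Fintype V] : Finset V :=
  Finset.univ.filter (fun v => ∀ I : Finset V, IsIndep G I → I.card = alphaG G → v ∈ I)

/-- `M` is a matching of `G`, given as a finite set of pairwise disjoint edges of `G`. -/
def IsMatchingF {V : Type*} (G : SimpleGraph V) (M : Finset (Sym2 V)) : Prop :=
  (↑M : Set (Sym2 V)) ⊆ G.edgeSet ∧
    ∀ e₁ ∈ M, ∀ e₂ ∈ M, e₁ ≠ e₂ → ∀ v : V, v ∈ e₁ → v ∉ e₂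

/-- The matching number `μ(G)`. -/
noncomputable def matchNum {V : Type*} (G : SimpleGraph V) [Fintype V] : ℕ :=
  ((Finset.univ : Finset (Finset (Sym2 V))).filter (IsMatchingF G)).sup Finset.card

/-- There is a matching from `A` into `B`: an injection of `A` into `B` along edges of `G`. -/
def MatchingFromInto {V : Type*} (G : SimpleGraph V) (A B : Finset V) : Prop :=
  ∃ f : V → V, Set.InjOn f ↑A ∧ ∀ a ∈ A, f a ∈ B ∧ G.Adj a (f a)

/-- The auxiliary bipartite graph `H_X` on vertex set `X ∪ N(X) ∪ {v, w}`, where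
`v = Sum.inr false` and `w = Sum.inr true`.  Its edges are the edges of `G` between
`X` and `N(X)`, the edge `vw`, and all edges from `v` to `N(X)`. -/
noncomputable def HX {V : Type*} (G : SimpleGraph V) [Fintype V] (X : Finset V) :
    SimpleGraph ({a : V // a ∈ X ∪ nbhd G X} ⊕ Bool) :=
  SimpleGraph.fromRel (fun p q =>
    match p, q with
    | Sum.inl a, Sum.inl b => a.1 ∈ X ∧ b.1 ∈ nbhd G X ∧ G.Adj a.1 b.1
    | Sum.inr false, Sum.inr true => True
    | Sum.inr false, Sum.inl b => b.1 ∈ nbhd G X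
    | _, _ => False)

/-- The copy of `X` inside the vertex set of `H_X`. -/
noncomputable def Xlift {V : Type*} (G : SimpleGraph V) [Fintype V] (X : Finset V) :
    Finset ({a : V // a ∈ X ∪ nbhd G X} ⊕ Bool) :=
  Finset.univ.filter (fun p => ∃ a : {a : V // a ∈ X ∪ nbhd G X}, p = Sum.inl a ∧ a.1 ∈ X)

/-- Edmonds–Gallai set `D`: vertices missed by some maximum matching. -/
noncomputable def gallaiD {V : Type*} (G : SimpleGraph V) [Fintype V] : Finset V :=
  Finset.univ.filter (fun v => ∃ M : Finset (Sym2 V),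
    IsMatchingF G M ∧ M.card = matchNum G ∧ ∀ e ∈ M, v ∉ e)

/-- Edmonds–Gallai set `A = N(D) - D`. -/
noncomputable def gallaiA {V : Type*} (G : SimpleGraph V) [Fintype V] : Finset V :=
  nbhd G (gallaiD G) \ gallaiD G

/-- Edmonds–Gallai set `C = V - A - D`. -/
noncomputable def gallaiC {V : Type*} (G : SimpleGraph V) [Fintype V] : Finset V :=
  (Finset.univ \ gallaiD G) \ gallaiA G

/-- The vertices of the singleton components of `G[D]`. -/
noncomputable def singlesD {V : Type*} (G : SimpleGraph V) [Fintype V] : Finset V :=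
  (gallaiD G).filter (fun v => ∀ w ∈ gallaiD G, ¬ G.Adj v w)

section Stmt6Aux

open Finset

variable {V : Type*} (G : SimpleGraph V) [Fintype V] [DecidableEq V] [DecidableRel G.Adj]

lemma mem_nbhd' {X : Finset V} {v : V} : v ∈ nbhd G X ↔ ∃ x ∈ X, G.Adj x v := by
  simp [nbhd]

lemma nbhd_mono' {X Y : Finset V} (h : X ⊆ Y) : nbhd G X ⊆ nbhd G Y := by
  intro v hv
  rw [mem_nbhd'] at hv ⊢
  obtain ⟨x, hx, ha⟩ := hv
  exact ⟨x, h hx, ha⟩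

lemma gdiff_le_crit' (X : Finset V) : gdiff G X ≤ critDiff G :=
  Finset.le_sup' (gdiff G) (Finset.mem_powerset.2 (Finset.subset_univ X))

lemma exists_min' : ∀ S : Finset V, 0 < gdiff G S →
    ∃ T, T ⊆ S ∧ 0 < gdiff G T ∧ ∀ T' ⊂ T, gdiff G T' ≤ 0 := by
  intro S
  induction S using Finset.strongInduction with
  | _ S ih =>
    intro hS
    by_cases h : ∀ T' ⊂ S, gdiff G T' ≤ 0
    · exact ⟨S, Finset.Subset.refl S, hS, h⟩
    · push_neg at h
      obtain ⟨T', hss, hpos⟩ := h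
      obtain ⟨T, h1, h2, h3⟩ := ih T' hss hpos
      exact ⟨T, h1.trans hss.subset, h2, h3⟩

lemma indep_sdiff' (X : Finset V) : IsIndep G (X \ nbhd G X) := by
  intro a ha b hb hab
  rw [Finset.mem_sdiff] at ha hb
  exact hb.2 ((mem_nbhd' G).2 ⟨a, ha.1, hab⟩)

lemma gdiff_sdiff_ge' (X : Finset V) : gdiff G X ≤ gdiff G (X \ nbhd G X) := by
  set Y := X \ nbhd G X with hY
  have hdisj : ∀ z ∈ nbhd G Y, z ∉ X := by
    intro z hz hzX
    rw [mem_nbhd'] at hz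
    obtain ⟨y, hy, hadj⟩ := hz
    rw [hY, Finset.mem_sdiff] at hy
    exact hy.2 ((mem_nbhd' G).2 ⟨z, hzX, hadj.symm⟩)
  have hsub : nbhd G Y ∪ (X ∩ nbhd G X) ⊆ nbhd G X := by
    intro z hz
    rcases Finset.mem_union.1 hz with h | h
    · exact nbhd_mono' G (Finset.sdiff_subset) h
    · exact (Finset.mem_inter.1 h).2
  have hdisj2 : Disjoint (nbhd G Y) (X ∩ nbhd G X) := by
    rw [Finset.disjoint_left]
    intro z hz hz2
    exact hdisj z hz (Finset.mem_inter.1 hz2).1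
  have hcard : (nbhd G Y).card + (X ∩ nbhd G X).card ≤ (nbhd G X).card := by
    rw [← Finset.card_union_of_disjoint hdisj2]
    exact Finset.card_le_card hsub
  have hXcard : Y.card + (X ∩ nbhd G X).card = X.card := by
    rw [hY]
    exact Finset.card_sdiff_add_card_inter X (nbhd G X)
  unfold gdiff
  omega

end Stmt6Aux
noncomputable def closureSet {V : Type*} (G : SimpleGraph V) [Fintype V] (A : Finset V)
    (g : V → V) (u : V) : Finset V :=
  Finset.univ.filter (fun v => ∀ S : Finset V, u ∈ S →
    (∀ w, w ∈ nbhd G S → w ∈ nbhd G A → g w ∈ S) → v ∈ S)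

section ClosureLemmas

set_option linter.unusedSectionVars false

open Finset

variable {V : Type*} (G : SimpleGraph V) [Fintype V]
variable (A : Finset V) (g : V → V) (u : V)

lemma mem_closureSet {v : V} : v ∈ closureSet G A g u ↔ ∀ S : Finset V, u ∈ S →
    (∀ w, w ∈ nbhd G S → w ∈ nbhd G A → g w ∈ S) → v ∈ S := by
  rw [closureSet, Finset.mem_filter]
  simp only [Finset.mem_univ, true_and]

lemma closure_subset {S : Finset V} (huS : u ∈ S)
    (hS : ∀ w, w ∈ nbhd G S → w ∈ nbhd G A → g w ∈ S) : closureSet G A g u ⊆ S := by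
  intro v hv
  exact (mem_closureSet G A g u).1 hv S huS hS

lemma mem_closure_self : u ∈ closureSet G A g u :=
  (mem_closureSet G A g u).2 (fun _ huS _ => huS)

lemma closure_closed : ∀ w, w ∈ nbhd G (closureSet G A g u) → w ∈ nbhd G A →
    g w ∈ closureSet G A g u := by
  intro w hw hwA
  refine (mem_closureSet G A g u).2 (fun S huS hS => ?_)
  have hsub : closureSet G A g u ⊆ S := closure_subset G A g u huS hS
  exact hS w (nbhd_mono' G hsub hw) hwA

lemma closure_elements : ∀ v ∈ closureSet G A g u, v = u ∨
    ∃ w, w ∈ nbhd G (closureSet G A g u) ∧ w ∈ nbhd G A ∧ v = g w := by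
  classical
  intro v hv
  set S' := (closureSet G A g u).filter (fun v => v = u ∨
    ∃ w, w ∈ nbhd G (closureSet G A g u) ∧ w ∈ nbhd G A ∧ v = g w) with hS'
  have hsub : closureSet G A g u ⊆ S' := by
    apply closure_subset
    · rw [hS', Finset.mem_filter]
      exact ⟨mem_closure_self G A g u, Or.inl rfl⟩
    · intro w hw hwA
      have hw' : w ∈ nbhd G (closureSet G A g u) :=
        nbhd_mono' G (Finset.filter_subset _ _) hw
      rw [hS', Finset.mem_filter]
      exact ⟨closure_closed G A g u w hw' hwA, Or.inr ⟨w, hw', hwA, rfl⟩⟩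
  have := hsub hv
  rw [hS', Finset.mem_filter] at this
  exact this.2

end ClosureLemmas
/-- the number of inclusion-minimal independent sets with positive
difference is at least the critical difference. -/
theorem stmt6 {V : Type*} (G : SimpleGraph V) [Fintype V] [DecidableEq V] [DecidableRel G.Adj] :
    critDiff G ≤
      (((Finset.univ : Finset (Finset V)).filter
        (fun S => IsIndep G S ∧ 0 < gdiff G S ∧ ∀ T ⊂ S, gdiff G T ≤ 0)).card : ℤ) := by
  classical
  rcases le_or_gt (critDiff G) 0 with hk | hk
  · exact hk.trans (Int.natCast_nonneg _)
  -- obtain a critical set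
  obtain ⟨X0, hX0mem, hX0⟩ := Finset.exists_mem_eq_sup'
    (s := (Finset.univ : Finset V).powerset) ⟨∅, Finset.empty_mem_powerset _⟩ (gdiff G)
  have hcrit : gdiff G X0 = critDiff G := hX0.symm
  -- independent critical set A
  set A := X0 \ nbhd G X0 with hA
  have hAcrit : gdiff G A = critDiff G := by
    refine le_antisymm (gdiff_le_crit' G A) ?_
    rw [← hcrit]
    exact gdiff_sdiff_ge' G X0
  have hAind : IsIndep G A := indep_sdiff' G X0
  -- Hall's condition
  have hall : ∀ s : Finset {w // w ∈ nbhd G A},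
      s.card ≤ (s.biUnion (fun w => A.filter (fun a => G.Adj w.1 a))).card := by
    intro s
    by_contra hcon
    push_neg at hcon
    set B := s.biUnion (fun w => A.filter (fun a => G.Adj w.1 a)) with hB
    set W := s.image Subtype.val with hW
    have hBA : B ⊆ A := by
      intro b hb
      rw [hB, Finset.mem_biUnion] at hb
      obtain ⟨w, _, hb⟩ := hb
      exact (Finset.mem_filter.1 hb).1
    have hWN : W ⊆ nbhd G A := by
      intro z hz
      rw [hW, Finset.mem_image] at hz
      obtain ⟨w, _, rfl⟩ := hz
      exact w.2
    have hNsub : nbhd G (A \ B) ⊆ nbhd G A \ W := by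
      intro z hz
      rw [Finset.mem_sdiff]
      refine ⟨nbhd_mono' G Finset.sdiff_subset hz, fun hzW => ?_⟩
      rw [mem_nbhd'] at hz
      obtain ⟨a, ha, hadj⟩ := hz
      rw [Finset.mem_sdiff] at ha
      rw [hW, Finset.mem_image] at hzW
      obtain ⟨w, hws, hwz⟩ := hzW
      apply ha.2
      rw [hB, Finset.mem_biUnion]
      refine ⟨w, hws, Finset.mem_filter.2 ⟨ha.1, ?_⟩⟩
      rw [hwz]
      exact hadj.symm
    have h1 : gdiff G (A \ B) ≤ critDiff G := gdiff_le_crit' G _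
    have hc1 : (A \ B).card = A.card - B.card := Finset.card_sdiff_of_subset hBA
    have hc2 : (nbhd G (A \ B)).card ≤ (nbhd G A).card - W.card := by
      calc (nbhd G (A \ B)).card ≤ (nbhd G A \ W).card := Finset.card_le_card hNsub
        _ = (nbhd G A).card - W.card := Finset.card_sdiff_of_subset hWN
    have hc3 : W.card = s.card := Finset.card_image_of_injective s Subtype.val_injective
    have hc4 : B.card ≤ A.card := Finset.card_le_card hBA
    have hc5 : W.card ≤ (nbhd G A).card := Finset.card_le_card hWN
    rw [← hAcrit] at h1
    unfold gdiff at h1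
    rw [hc1] at h1
    omega
  obtain ⟨f, hfinj, hfmem⟩ := (Finset.all_card_le_biUnion_card_iff_exists_injective _).1 hall
  set g : V → V := fun w => if h : w ∈ nbhd G A then (f ⟨w, h⟩ : V) else w with hg
  have hg1 : ∀ w ∈ nbhd G A, g w ∈ A ∧ G.Adj w (g w) := by
    intro w hw
    have := hfmem ⟨w, hw⟩
    rw [Finset.mem_filter] at this
    rw [hg]
    simp only [dif_pos hw]
    exact this
  have hg2 : ∀ w ∈ nbhd G A, ∀ w' ∈ nbhd G A, g w = g w' → w = w' := by
    intro w hw w' hw' h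
    rw [hg] at h
    simp only [dif_pos hw, dif_pos hw'] at h
    exact congrArg Subtype.val (hfinj h)
  set M := (nbhd G A).image g with hM
  set U := A \ M with hU
  have hMA : M ⊆ A := by
    intro m hm
    rw [hM, Finset.mem_image] at hm
    obtain ⟨w, hw, rfl⟩ := hm
    exact (hg1 w hw).1
  have hMcard : M.card = (nbhd G A).card := by
    rw [hM]
    exact Finset.card_image_of_injOn (fun w hw w' hw' h => hg2 w hw w' hw' h)
  have hUcard : (U.card : ℤ) = critDiff G := by
    have h1 : U.card = A.card - M.card := by rw [hU]; exact Finset.card_sdiff_of_subset hMA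
    have h2 : M.card ≤ A.card := Finset.card_le_card hMA
    have h3 : (A.card : ℤ) - (nbhd G A).card = critDiff G := hAcrit
    omega
  -- closure sets
  have hSuA : ∀ u ∈ U, closureSet G A g u ⊆ A := by
    intro u hu
    refine closure_subset G A g u (Finset.mem_sdiff.1 hu).1 ?_
    intro w _ hwA
    exact (hg1 w hwA).1
  have hgM : ∀ w ∈ nbhd G A, g w ∈ M := by
    intro w hw
    rw [hM]
    exact Finset.mem_image.2 ⟨w, hw, rfl⟩
  have hSupos : ∀ u ∈ U, 0 < gdiff G (closureSet G A g u) := by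
    intro u hu
    set Su := closureSet G A g u with hSu
    have hcard : (nbhd G Su).card ≤ (Su.erase u).card := by
      refine Finset.card_le_card_of_injOn g ?_ ?_
      · intro w hw
        have hwA : w ∈ nbhd G A := nbhd_mono' G (hSuA u hu) hw
        refine Finset.mem_erase.2 ⟨?_, closure_closed G A g u w hw hwA⟩
        intro hgu
        exact (Finset.mem_sdiff.1 hu).2 (hgu ▸ hgM w hwA)
      · intro w hw w' hw' h
        exact hg2 w (nbhd_mono' G (hSuA u hu) hw) w' (nbhd_mono' G (hSuA u hu) hw') h
    have h2 : (Su.erase u).card = Su.card - 1 := Finset.card_erase_of_mem (mem_closure_self G A g u)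
    have h3 : 0 < Su.card := Finset.card_pos.2 ⟨u, mem_closure_self G A g u⟩
    unfold gdiff
    omega
  have hSusub : ∀ u ∈ U, ∀ B ⊆ closureSet G A g u, u ∉ B → gdiff G B ≤ 0 := by
    intro u hu B hB huB
    have hch : ∀ v : V, ∃ w : V, v ∈ B → (w ∈ nbhd G B ∧ w ∈ nbhd G A ∧ v = g w) := by
      intro v
      by_cases hv : v ∈ B
      · rcases closure_elements G A g u v (hB hv) with rfl | ⟨w, hw1, hw2, rfl⟩
        · exact absurd hv huB
        · refine ⟨w, fun _ => ⟨?_, hw2, rfl⟩⟩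
          exact (mem_nbhd' G).2 ⟨g w, hv, (hg1 w hw2).2.symm⟩
      · exact ⟨v, fun h => absurd h hv⟩
    choose φ hφ using hch
    have hcard : B.card ≤ (nbhd G B).card := by
      refine Finset.card_le_card_of_injOn φ (fun v hv => (hφ v hv).1) ?_
      intro v hv v' hv' h
      have e1 := (hφ v hv).2.2
      have e2 := (hφ v' hv').2.2
      rw [e1, e2, h]
    unfold gdiff
    omega
  -- minimal positive subsets
  have key : ∀ u ∈ U, ∃ T : Finset V,
      (IsIndep G T ∧ 0 < gdiff G T ∧ ∀ T' ⊂ T, gdiff G T' ≤ 0) ∧ u ∈ T ∧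
        T ⊆ closureSet G A g u := by
    intro u hu
    obtain ⟨T, hT1, hT2, hT3⟩ := exists_min' G (closureSet G A g u) (hSupos u hu)
    have huT : u ∈ T := by
      by_contra huT
      exact absurd (hSusub u hu T hT1 huT) (not_le.2 hT2)
    refine ⟨T, ⟨?_, hT2, hT3⟩, huT, hT1⟩
    intro a ha b hb
    exact hAind a (hSuA u hu (hT1 ha)) b (hSuA u hu (hT1 hb))
  have key' : ∀ u : V, ∃ T : Finset V, u ∈ U →
      ((IsIndep G T ∧ 0 < gdiff G T ∧ ∀ T' ⊂ T, gdiff G T' ≤ 0) ∧ u ∈ T ∧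
        T ⊆ closureSet G A g u) := by
    intro u
    by_cases hu : u ∈ U
    · obtain ⟨T, h⟩ := key u hu
      exact ⟨T, fun _ => h⟩
    · exact ⟨∅, fun h => absurd h hu⟩
  choose Φ hΦ using key'
  have hcard : U.card ≤ ((Finset.univ : Finset (Finset V)).filter
      (fun S => IsIndep G S ∧ 0 < gdiff G S ∧ ∀ T ⊂ S, gdiff G T ≤ 0)).card := by
    refine Finset.card_le_card_of_injOn Φ ?_ ?_
    · intro u hu
      exact Finset.mem_filter.2 ⟨Finset.mem_univ _, (hΦ u hu).1⟩
    · intro u hu u' hu' h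
      rw [Finset.mem_coe] at hu hu'
      have huin : u ∈ closureSet G A g u' := (hΦ u' hu').2.2 (h ▸ (hΦ u hu).2.1)
      rcases closure_elements G A g u' u huin with h' | ⟨w, _, hw2, rfl⟩
      · exact h'
      · exact absurd (hgM w hw2) (Finset.mem_sdiff.1 hu).2
  calc critDiff G = (U.card : ℤ) := hUcard.symm
    _ ≤ _ := by exact_mod_cast hcard
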